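/- (Weight-zero case of the stabilization claim in the proof of Proposition prop:modulus-limit, §9.) Let n ≥ 1, M ≥ 1 and r ≥ 0 be integers with r < p^M. Then the image of Fil^p_r W_{n+M}(L) under the M-fold restriction R^M : W_{n+M}(L) → Wₙ(L) equals Wₙ(O); in particular R^M(Fil^p_r W_{n+M}(L)) ⊆ Wₙ(O). -/

import Mathlib

/-!
Restriction `R^M` is a ring map, so it suffices to see that each summand `p^s · f` with
`f ∈ fil_{r p^s} W_{n+M}(L)` restricts into `Wₙ(O)`. In characteristic `p`, multiplication by
`p^s` shifts the components by `s` and raises them to the `p^s`-th power, so only the components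
`fᵢ` with `i + s < n` survive. For those, the weight `p^{n+M-1-i} ≥ p^{M+s} > r p^s` forces the
`fil^log` part to be integral, while the Verschiebung part starts only at index
`n + M - v_p(r p^s) > n - s`, because `v_p(r p^s) ≤ log_p(r p^s) < M + s`.
Conversely an integral vector, padded by zeros, already lies in `fil_r`.
-/

noncomputable section

open scoped Classical

/-- A discretely valued field: a field `L` together with a normalized additive valuation
`v : L → ℤ ∪ {∞}` and a uniformizer `z` (so `v z = 1`).  The valuation ring is
`O = {a : L | 0 ≤ v a}`, with maximal ideal `𝔪 = {a : L | 1 ≤ v a}`. -/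
structure DVField (L : Type) [Field L] : Type where
  v : L → WithTop ℤ
  z : L
  v_top : ∀ a : L, v a = ⊤ ↔ a = 0
  v_mul : ∀ a b : L, v (a * b) = v a + v b
  v_add : ∀ a b : L, min (v a) (v b) ≤ v (a + b)
  v_z : v z = 1

namespace DVField

variable {L : Type} [Field L]

/-- `Wₙ(O) ⊆ Wₙ(L)`: the truncated Witt vectors all of whose components are integral. -/
def WO (D : DVField L) (p n : ℕ) : Set (TruncatedWittVector p n L) :=
  {x | ∀ i : Fin n, 0 ≤ D.v (x.coeff i)}

/-- The Brylinski–Kato filtration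
`fil^log_r Wₙ(L) = {(a₀, …, a_{n-1}) | p^{n-1-i} · v(aᵢ) ≥ -r for all i}`. -/
def filLog (D : DVField L) (p r n : ℕ) : Set (TruncatedWittVector p n L) :=
  {x | ∀ i : Fin n, (↑(-(r : ℤ)) : WithTop ℤ) ≤ p ^ (n - 1 - (i : ℕ)) • D.v (x.coeff i)}

end DVField

/-- The Verschiebung `V : Wₙ(L) → W_{n+1}(L)`, shifting components. -/
def wV {p : ℕ} {L : Type} [Field L] {n : ℕ} (x : TruncatedWittVector p n L) :
    TruncatedWittVector p (n + 1) L :=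
  TruncatedWittVector.mk p fun i =>
    if h : (i : ℕ) = 0 then 0 else x.coeff ⟨(i : ℕ) - 1, by have := i.isLt; omega⟩

/-- The iterated Verschiebung `V^{n-m} : W_m(L) → Wₙ(L)` (for `m ≤ n`), given by shifting
components by `n - m`. -/
def wVit {p : ℕ} {L : Type} [Field L] {m n : ℕ} (x : TruncatedWittVector p m L) :
    TruncatedWittVector p n L :=
  TruncatedWittVector.mk p fun i =>
    if h : n - m ≤ (i : ℕ) ∧ (i : ℕ) - (n - m) < m then x.coeff ⟨(i : ℕ) - (n - m), h.2⟩ else 0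

/-- The restriction `R : W_{n+1}(L) → Wₙ(L)`, dropping the last component. -/
def wR {p : ℕ} {L : Type} [Field L] {n : ℕ} (x : TruncatedWittVector p (n + 1) L) :
    TruncatedWittVector p n L :=
  TruncatedWittVector.mk p fun i => x.coeff i.castSucc

/-- The iterated restriction `R^{m-n} : W_m(L) → Wₙ(L)` (for `n ≤ m`), keeping the first `n`
components. -/
def wRes {p : ℕ} {L : Type} [Field L] {m n : ℕ} (x : TruncatedWittVector p m L) :
    TruncatedWittVector p n L :=
  TruncatedWittVector.mk p fun i => if h : (i : ℕ) < m then x.coeff ⟨(i : ℕ), h⟩ else 0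

/-- The Frobenius `F : W_{n+1}(L) → Wₙ(L)` in characteristic `p`:
componentwise `p`-th power followed by restriction. -/
def wF {p : ℕ} {L : Type} [Field L] {n : ℕ} (x : TruncatedWittVector p (n + 1) L) :
    TruncatedWittVector p n L :=
  TruncatedWittVector.mk p fun i => x.coeff i.castSucc ^ p

/-- The Teichmüller lift `[a] = (a, 0, …, 0)`. -/
def wT (p : ℕ) {L : Type} [Field L] (n : ℕ) (a : L) : TruncatedWittVector p n L :=
  TruncatedWittVector.mk p fun i => if (i : ℕ) = 0 then a else 0

/-- The map `p̲ : Wₙ(L) → W_{n+1}(L)`: lift to length `n+1` (by appending a zero component)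
and multiply by `p`. -/
def wP {p : ℕ} [Fact p.Prime] {L : Type} [Field L] {n : ℕ} (x : TruncatedWittVector p n L) :
    TruncatedWittVector p (n + 1) L :=
  p • (wRes x : TruncatedWittVector p (n + 1) L)

namespace DVField

variable {L : Type} [Field L]

/-- The Kato–Matsuda filtration
`fil_r Wₙ(L) = fil^log_{r-1} Wₙ(L) + V^{n-m}(fil^log_r W_m(L))` where `m = min(v_p(r), n)`,
and `fil_0 Wₙ(L) = Wₙ(O)`. -/
def filKM (D : DVField L) (p : ℕ) [Fact p.Prime] (r n : ℕ) :
    Set (TruncatedWittVector p n L) :=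
  if r = 0 then D.WO p n
  else {x | ∃ a ∈ D.filLog p (r - 1) n,
    ∃ b ∈ D.filLog p r (min (padicValNat p r) n), x = a + wVit b}

/-- The `p`-saturation `Fil^p_r Wₙ(L) = Σ_{s=0}^{n-1} p^s · fil_{r·p^s} Wₙ(L)`. -/
def FilP (D : DVField L) (p : ℕ) [Fact p.Prime] (r n : ℕ) :
    Set (TruncatedWittVector p n L) :=
  {x | ∃ f : Fin n → TruncatedWittVector p n L,
      (∀ s : Fin n, f s ∈ D.filKM p (r * p ^ (s : ℕ)) n) ∧
      x = ∑ s : Fin n, p ^ (s : ℕ) • f s}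

end DVField

namespace DVField

variable {L : Type} [Field L] (D : DVField L)

lemma v_zero : D.v 0 = ⊤ := (D.v_top 0).2 rfl

lemma v_one : D.v 1 = 0 := by
  have h := D.v_mul 1 1
  rw [one_mul] at h
  cases hv : D.v 1 with
  | top => exact absurd ((D.v_top 1).1 hv) one_ne_zero
  | coe c =>
    rw [hv, ← WithTop.coe_add, WithTop.coe_inj] at h
    rw [show c = 0 by omega]
    rfl

def toAddValuation : AddValuation L (WithTop ℤ) :=
  AddValuation.of D.v D.v_zero D.v_one D.v_add D.v_mul

def integers : Subring L where
  carrier := {a | 0 ≤ D.v a}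
  zero_mem' := by simp [D.v_zero]
  one_mem' := by simp [D.v_one]
  add_mem' {a b} ha hb := le_trans (le_min ha hb) (D.v_add a b)
  mul_mem' {a b} ha hb := by
    simp only [Set.mem_ofPred_eq, D.v_mul]
    exact add_nonneg ha hb
  neg_mem' {a} ha := by
    change 0 ≤ D.toAddValuation (-a)
    rwa [AddValuation.map_neg]

variable {D} in
lemma v_pow_nonneg {a : L} (h : 0 ≤ D.v a) (k : ℕ) : 0 ≤ D.v (a ^ k) := by
  change 0 ≤ D.toAddValuation (a ^ k)
  rw [AddValuation.map_pow]
  exact nsmul_nonneg h k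

section Integral

variable (p : ℕ) [Fact p.Prime]

/-- Realizing `Wₙ(O)` as the image of the ring map `W(O) → Wₙ(L)` makes its closure under the
Witt vector operations automatic. -/
def truncIntegers (n : ℕ) : Subring (TruncatedWittVector p n L) :=
  ((WittVector.truncate n).comp (WittVector.map D.integers.subtype)).range

lemma coe_truncIntegers (n : ℕ) : (D.truncIntegers p n : Set _) = D.WO p n := by
  ext x
  constructor
  · rintro ⟨X, rfl⟩ i
    rw [RingHom.comp_apply, WittVector.coeff_truncate, WittVector.map_coeff]
    exact (X.coeff i).2
  · intro hx
    refine ⟨WittVector.mk p fun i => if h : i < n then ⟨x.coeff ⟨i, h⟩, hx ⟨i, h⟩⟩ else 0, ?_⟩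
    ext i
    simp [WittVector.coeff_truncate, WittVector.map_coeff, i.isLt]

variable {p}

lemma mem_WO_iff {n : ℕ} {x : TruncatedWittVector p n L} :
    x ∈ D.WO p n ↔ x ∈ D.truncIntegers p n := by
  rw [← SetLike.mem_coe, coe_truncIntegers]

lemma zero_mem_WO (n : ℕ) : (0 : TruncatedWittVector p n L) ∈ D.WO p n :=
  D.mem_WO_iff.2 (zero_mem _)

lemma add_mem_WO {n : ℕ} {x y : TruncatedWittVector p n L} (hx : x ∈ D.WO p n)
    (hy : y ∈ D.WO p n) : x + y ∈ D.WO p n :=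
  D.mem_WO_iff.2 (add_mem (D.mem_WO_iff.1 hx) (D.mem_WO_iff.1 hy))

lemma sum_mem_WO {n : ℕ} {ι : Type*} (t : Finset ι) {f : ι → TruncatedWittVector p n L}
    (hf : ∀ i ∈ t, f i ∈ D.WO p n) : ∑ i ∈ t, f i ∈ D.WO p n :=
  D.mem_WO_iff.2 (sum_mem fun i hi => D.mem_WO_iff.1 (hf i hi))

end Integral

end DVField

lemma WithTop.nonneg_of_neg_le_nsmul {c : WithTop ℤ} {R k : ℕ}
    (h : (↑(-(R : ℤ)) : WithTop ℤ) ≤ k • c) (hRk : R < k) : 0 ≤ c := by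
  cases c with
  | top => exact le_top
  | coe c =>
    rw [← WithTop.coe_nsmul, WithTop.coe_le_coe, nsmul_eq_mul] at h
    have : 0 ≤ c := by
      by_contra! hc
      nlinarith
    exact_mod_cast this

section Components

variable {L : Type} [Field L] {p : ℕ}

lemma wVit_coeff_eq_zero {m n : ℕ} (b : TruncatedWittVector p m L) {i : Fin n}
    (hi : (i : ℕ) < n - m) : (wVit b : TruncatedWittVector p n L).coeff i = 0 := by
  rw [wVit, TruncatedWittVector.coeff_mk, dif_neg (by omega)]

lemma wVit_zero [Fact p.Prime] {m n : ℕ} :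
    (wVit (0 : TruncatedWittVector p m L) : TruncatedWittVector p n L) = 0 := by
  ext i
  simp [wVit]

lemma wRes_wRes_of_le {m n : ℕ} (h : n ≤ m) (x : TruncatedWittVector p n L) :
    (wRes (wRes x : TruncatedWittVector p m L) : TruncatedWittVector p n L) = x := by
  ext i
  simp [wRes, show (i : ℕ) < m by omega]

variable [Fact p.Prime]

lemma wRes_eq_truncate {m n : ℕ} (h : n ≤ m) (x : TruncatedWittVector p m L) :
    (wRes x : TruncatedWittVector p n L) = TruncatedWittVector.truncate h x := by
  ext i
  rw [wRes, TruncatedWittVector.coeff_mk, TruncatedWittVector.coeff_truncate,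
    dif_pos (lt_of_lt_of_le i.isLt h)]
  rfl

lemma wRes_add {m n : ℕ} (h : n ≤ m) (x y : TruncatedWittVector p m L) :
    (wRes (x + y) : TruncatedWittVector p n L) = wRes x + wRes y := by
  simp only [wRes_eq_truncate h, map_add]

lemma wRes_sum {m n : ℕ} (h : n ≤ m) {ι : Type*} (t : Finset ι)
    (f : ι → TruncatedWittVector p m L) :
    (wRes (∑ i ∈ t, f i) : TruncatedWittVector p n L) = ∑ i ∈ t, wRes (f i) := by
  simp only [wRes_eq_truncate h, map_sum]

lemma coeff_wRes_pow_smul [CharP L p] {m n : ℕ} (h : n ≤ m) (y : TruncatedWittVector p m L)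
    (s : ℕ) (i : Fin n) :
    (wRes (p ^ s • y) : TruncatedWittVector p n L).coeff i =
      if hs : s ≤ (i : ℕ) then y.coeff ⟨(i : ℕ) - s, by omega⟩ ^ p ^ s else 0 := by
  obtain ⟨Y, rfl⟩ := WittVector.truncate_surjective p m L y
  rw [← map_nsmul, nsmul_eq_mul, mul_comm, Nat.cast_pow, wRes_eq_truncate h,
    TruncatedWittVector.coeff_truncate, WittVector.coeff_truncate]
  split_ifs with hs
  · rw [WittVector.coeff_truncate, Fin.val_castLE, ← WittVector.mul_pow_charP_coeff_succ,
      Nat.sub_add_cancel hs]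
  · exact WittVector.mul_pow_charP_coeff_zero _ (by simpa using hs)

end Components

namespace DVField

variable {L : Type} [Field L] (D : DVField L) {p : ℕ}

lemma v_coeff_nonneg_of_mem_filLog {R m : ℕ} {x : TruncatedWittVector p m L}
    (hx : x ∈ D.filLog p R m) {i : Fin m} (hi : R < p ^ (m - 1 - (i : ℕ))) :
    0 ≤ D.v (x.coeff i) :=
  WithTop.nonneg_of_neg_le_nsmul (hx i) hi

lemma WO_subset_filLog (R m : ℕ) : D.WO p m ⊆ D.filLog p R m :=
  fun _ hx i => le_trans (by exact_mod_cast neg_nonpos.mpr (Int.natCast_nonneg R))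
    (nsmul_nonneg (hx i) _)

lemma wRes_mem_WO {m n : ℕ} {x : TruncatedWittVector p n L} (hx : x ∈ D.WO p n) :
    (wRes x : TruncatedWittVector p m L) ∈ D.WO p m := by
  intro i
  rw [wRes, TruncatedWittVector.coeff_mk]
  split_ifs
  · exact hx _
  · simp [D.v_zero]

variable [Fact p.Prime]

lemma WO_subset_filKM (r m : ℕ) : D.WO p m ⊆ D.filKM p r m := by
  intro x hx
  unfold filKM
  split_ifs
  · exact hx
  · refine ⟨x, D.WO_subset_filLog _ _ hx, 0, D.WO_subset_filLog _ _ (D.zero_mem_WO _), ?_⟩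
    rw [wVit_zero, add_zero]

lemma WO_subset_FilP (r m : ℕ) : D.WO p m ⊆ D.FilP p r m := by
  intro y hy
  cases m with
  | zero => exact ⟨0, fun s => s.elim0, TruncatedWittVector.ext fun i => i.elim0⟩
  | succ m =>
    refine ⟨Pi.single 0 y, fun s => D.WO_subset_filKM _ _ ?_, ?_⟩
    · rcases eq_or_ne s 0 with rfl | hs
      · simpa using hy
      · simpa [Pi.single_eq_of_ne hs] using D.zero_mem_WO _
    · rw [Fintype.sum_eq_single 0 fun s hs => by rw [Pi.single_eq_of_ne hs, smul_zero]]
      simp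

variable [CharP L p]

lemma wRes_pow_smul_mem_WO {m n : ℕ} (h : n ≤ m) (s : ℕ) (y : TruncatedWittVector p m L)
    (hy : ∀ i : Fin m, (i : ℕ) + s < n → 0 ≤ D.v (y.coeff i)) :
    (wRes (p ^ s • y) : TruncatedWittVector p n L) ∈ D.WO p n := by
  intro i
  rw [coeff_wRes_pow_smul h]
  split_ifs with hs
  · exact v_pow_nonneg (hy _ (by simp; omega)) _
  · simp [D.v_zero]

lemma wRes_pow_smul_mem_WO_of_mem_filKM {n M r : ℕ} (hr : r < p ^ M) (s : ℕ)
    {f : TruncatedWittVector p (n + M) L} (hf : f ∈ D.filKM p (r * p ^ s) (n + M)) :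
    (wRes (p ^ s • f) : TruncatedWittVector p n L) ∈ D.WO p n := by
  have hnm : n ≤ n + M := Nat.le_add_right n M
  have hp : 0 < p := (Fact.out : p.Prime).pos
  have hrs : r * p ^ s < p ^ (M + s) := by
    rw [pow_add]
    exact Nat.mul_lt_mul_of_pos_right hr (pow_pos hp s)
  unfold filKM at hf
  split_ifs at hf with h0
  · exact D.wRes_pow_smul_mem_WO hnm s f fun i _ => hf i
  obtain ⟨a, ha, b, -, rfl⟩ := hf
  rw [smul_add, wRes_add hnm]
  refine D.add_mem_WO ?_ ?_
  · refine D.wRes_pow_smul_mem_WO hnm s a fun i hi => D.v_coeff_nonneg_of_mem_filLog ha ?_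
    calc r * p ^ s - 1 < r * p ^ s := Nat.sub_lt (by omega) one_pos
      _ < p ^ (M + s) := hrs
      _ ≤ p ^ (n + M - 1 - (i : ℕ)) := Nat.pow_le_pow_right hp (by omega)
  · have hval : padicValNat p (r * p ^ s) < M + s :=
      (padicValNat_le_nat_log _).trans_lt (Nat.log_lt_of_lt_pow h0 hrs)
    refine D.wRes_pow_smul_mem_WO hnm s _ fun i hi => ?_
    rw [wVit_coeff_eq_zero b (by omega), D.v_zero]
    exact le_top

end DVField

theorem statement19_general (p : ℕ) [Fact p.Prime] (L : Type) [Field L] [CharP L p]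
    (D : DVField L) (n M r : ℕ) (hr : r < p ^ M) :
    (fun x : TruncatedWittVector p (n + M) L => (wRes x : TruncatedWittVector p n L)) ''
        D.FilP p r (n + M) = D.WO p n := by
  have hnm : n ≤ n + M := Nat.le_add_right n M
  apply Set.Subset.antisymm
  · rintro _ ⟨_, ⟨f, hf, rfl⟩, rfl⟩
    dsimp only
    rw [wRes_sum hnm]
    exact D.sum_mem_WO _ fun s _ => D.wRes_pow_smul_mem_WO_of_mem_filKM hr s (hf s)
  · intro x hx
    exact ⟨wRes x, D.WO_subset_FilP r _ (D.wRes_mem_WO hx), wRes_wRes_of_le hnm x⟩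

/-- (Weight-zero stabilization.)  Let `n ≥ 1`, `M ≥ 1` and `r ≥ 0` with
`r < p^M`.  Then the image of `Fil^p_r W_{n+M}(L)` under the `M`-fold restriction
`R^M : W_{n+M}(L) → Wₙ(L)` equals `Wₙ(O)`. -/
theorem statement19 (p : ℕ) [Fact p.Prime] (L : Type) [Field L] [CharP L p]
    (D : DVField L) (n M r : ℕ) (hn : 1 ≤ n) (hM : 1 ≤ M) (hr : r < p ^ M) :
    (fun x : TruncatedWittVector p (n + M) L => (wRes x : TruncatedWittVector p n L)) ''
        D.FilP p r (n + M) = D.WO p n :=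
  statement19_general p L D n M r hr
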